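/- Let d ≥ 1, let Ω ⊆ ℝ^d be a bounded measurable set, let ρ : ℝ^d → ℝ be a nonnegative integrable function with associated measure π(A) = ∫_A ρ(x) dx, let dist : ℝ^d × ℝ^d → ℝ be a continuous nonnegative function, let y_1, …, y_K ∈ ℝ^d, and let c ∈ ℝ^K. Define F(w) = ∫_Ω min_{j=1,…,K}(dist(x,y_j) − w_j) ρ(x) dx + Σ_k w_k c_k and the tie-broken power cells V_k(w) = {x ∈ Ω : dist(x,y_k) − w_k ≤ dist(x,y_j) − w_j for all j, with strict inequality for all j < k}. Suppose w ∈ ℝ^K satisfies the capacity constraints π(V_k(w)) = c_k for every k = 1, …, K. Then w is a global maximizer of F, i.e. F(w') ≤ F(w) for all w' ∈ ℝ^K. -/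

import Mathlib

/-!
On the cell `V k` of `w` the minimum `⨅ j, dst x (y j) - w j` is attained at `k`, so for any `w'`
the minimum `⨅ j, dst x (y j) - w' j` is at most `(⨅ j, dst x (y j) - w j) + (w k - w' k)` there.
Integrating against `ρ` over the partition of `Ω` into the cells and using `π (V k) = c k` gives
`∫ min (w') ρ ≤ ∫ min (w) ρ + ∑ k, (w k - w' k) * c k`, which is `F w' ≤ F w`.
-/

open MeasureTheory

/-- The tie-broken power cell of the generator `y k` with weight `w k` in `Ω`: points of `Ω`
where `dst x (y k) - w k` is minimal among all generators, with ties assigned to the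
smallest index. -/
def powerCell {d K : ℕ} (Ω : Set (EuclideanSpace ℝ (Fin d)))
    (dst : EuclideanSpace ℝ (Fin d) → EuclideanSpace ℝ (Fin d) → ℝ)
    (y : Fin K → EuclideanSpace ℝ (Fin d)) (w : Fin K → ℝ) (k : Fin K) :
    Set (EuclideanSpace ℝ (Fin d)) :=
  {x ∈ Ω | (∀ j, dst x (y k) - w k ≤ dst x (y j) - w j) ∧
    ∀ j, j < k → dst x (y k) - w k < dst x (y j) - w j}

open Set Function

section PowerCell

variable {d K : ℕ} {Ω : Set (EuclideanSpace ℝ (Fin d))}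
  {dst : EuclideanSpace ℝ (Fin d) → EuclideanSpace ℝ (Fin d) → ℝ}
  {y : Fin K → EuclideanSpace ℝ (Fin d)} {w : Fin K → ℝ}

theorem measurableSet_powerCell (hΩ : MeasurableSet Ω)
    (hdst : ∀ j, Measurable fun x => dst x (y j)) (k : Fin K) :
    MeasurableSet (powerCell Ω dst y w k) := by
  have hcost : ∀ j, Measurable fun x => dst x (y j) - w j := fun j => (hdst j).sub_const _
  refine measurableSet_setOfPred.2 ((measurableSet_setOfPred.1 hΩ).and
    ((Measurable.forall fun j => ?_).and (Measurable.forall fun j => measurable_const.imp ?_)))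
  · exact measurableSet_setOfPred.1 (measurableSet_le (hcost k) (hcost j))
  · exact measurableSet_setOfPred.1 (measurableSet_lt (hcost k) (hcost j))

theorem pairwise_disjoint_powerCell : Pairwise (Disjoint on powerCell Ω dst y w) := by
  intro k l hkl
  refine disjoint_left.2 fun x hxk hxl => ?_
  rcases hkl.lt_or_gt with h | h
  · exact (hxl.2.2 k h).not_ge (hxk.2.1 l)
  · exact (hxk.2.2 l h).not_ge (hxl.2.1 k)

theorem iUnion_powerCell [Nonempty (Fin K)] : ⋃ k, powerCell Ω dst y w k = Ω := by
  refine (iUnion_subset fun k => sep_subset Ω _).antisymm fun x hx => mem_iUnion.2 ?_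
  -- the lexicographically least pair (cost, index) breaks ties towards the smallest index
  obtain ⟨k, hk⟩ := Finite.exists_min fun j => toLex (dst x (y j) - w j, j)
  have hk' := fun j => Prod.Lex.toLex_le_toLex'.1 (hk j)
  exact ⟨k, hx, fun j => (hk' j).1, fun j hj =>
    (hk' j).1.lt_of_ne fun heq => hj.not_ge ((hk' j).2 heq)⟩

end PowerCell

theorem exists_abs_le_of_isBounded {X Y ι : Type*} [PseudoMetricSpace X] [ProperSpace X]
    [TopologicalSpace Y] [Finite ι] {dst : X → Y → ℝ}
    (hdst : Continuous fun p : X × Y => dst p.1 p.2) {Ω : Set X}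
    (hΩ : Bornology.IsBounded Ω) (y : ι → Y) :
    ∃ C, ∀ j, ∀ x ∈ Ω, |dst x (y j)| ≤ C := by
  obtain ⟨C, hC⟩ := (hΩ.isCompact_closure.prod (finite_range y).isCompact)
    |>.exists_bound_of_continuousOn hdst.continuousOn
  exact ⟨C, fun j x hx => hC (x, y j) ⟨subset_closure hx, j, rfl⟩⟩

theorem abs_ciInf_le {ι : Type*} [Finite ι] [Nonempty ι] {a : ι → ℝ} {B : ℝ}
    (h : ∀ j, |a j| ≤ B) : |⨅ j, a j| ≤ B := by
  obtain ⟨j₀⟩ := ‹Nonempty ι›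
  exact abs_le.2 ⟨le_ciInf fun j => (abs_le.1 (h j)).1,
    (ciInf_le (finite_range a).bddBelow j₀).trans (abs_le.1 (h j₀)).2⟩

theorem ciInf_sub_le_ciInf_sub_add {ι : Type*} [Finite ι] {a w w' : ι → ℝ} {k : ι}
    (hk : ∀ j, a k - w k ≤ a j - w j) :
    ⨅ j, (a j - w' j) ≤ (⨅ j, (a j - w j)) + (w k - w' k) := by
  have : Nonempty ι := ⟨k⟩
  have hmin : ⨅ j, (a j - w j) = a k - w k :=
    (ciInf_le (finite_range _).bddBelow k).antisymm (le_ciInf hk)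
  have := ciInf_le (finite_range fun j => a j - w' j).bddBelow k
  linarith

section Dual

variable {X ι : Type*} [MeasurableSpace X] [Fintype ι]

/-- The semi-discrete dual functional `F`, with transport costs `g j x` and target masses `m`. -/
noncomputable def dualObjective (μ : Measure X) (Ω : Set X) (ρ : X → ℝ) (g : ι → X → ℝ)
    (m : ι → ℝ) (w : ι → ℝ) : ℝ :=
  (∫ x in Ω, (⨅ j, (g j x - w j)) * ρ x ∂μ) + ∑ k, w k * m k

variable [Nonempty ι] {μ : Measure X} {Ω : Set X} {ρ : X → ℝ} {g : ι → X → ℝ}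

theorem integrableOn_ciInf_sub_mul (hΩ : MeasurableSet Ω) (hρ : IntegrableOn ρ Ω μ)
    (hg : ∀ j, Measurable (g j)) (hgb : ∃ C, ∀ j, ∀ x ∈ Ω, |g j x| ≤ C) (w : ι → ℝ) :
    IntegrableOn (fun x => (⨅ j, (g j x - w j)) * ρ x) Ω μ := by
  obtain ⟨C, hC⟩ := hgb
  obtain ⟨B, hB⟩ := Finite.exists_le fun j => |w j|
  refine hρ.bdd_mul (c := C + B)
    (Measurable.iInf fun j => (hg j).sub_const _).aestronglyMeasurable ((ae_restrict_iff' hΩ).2 (.of_forall fun x hx => ?_))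
  exact abs_ciInf_le fun j => (abs_sub _ _).trans (add_le_add (hC j x hx) (hB j))

theorem isMaxOn_dualObjective (hΩ : MeasurableSet Ω) (hρ0 : ∀ x, 0 ≤ ρ x)
    (hρ : IntegrableOn ρ Ω μ) (hg : ∀ j, Measurable (g j))
    (hgb : ∃ C, ∀ j, ∀ x ∈ Ω, |g j x| ≤ C) {V : ι → Set X} {w m : ι → ℝ}
    (hVm : ∀ k, MeasurableSet (V k)) (hVd : Pairwise (Disjoint on V)) (hVU : ⋃ k, V k = Ω)
    (hVmin : ∀ k, ∀ x ∈ V k, ∀ j, g k x - w k ≤ g j x - w j)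
    (hm : ∀ k, ∫ x in V k, ρ x ∂μ = m k) :
    IsMaxOn (dualObjective μ Ω ρ g m) univ w := by
  refine isMaxOn_univ_iff.2 fun w' => ?_
  have hint := integrableOn_ciInf_sub_mul hΩ hρ hg hgb
  have hsub : ∀ k, V k ⊆ Ω := fun k => hVU ▸ subset_iUnion V k
  have hsplit : ∀ v : ι → ℝ, ∫ x in Ω, (⨅ j, (g j x - v j)) * ρ x ∂μ
      = ∑ k, ∫ x in V k, (⨅ j, (g j x - v j)) * ρ x ∂μ := fun v => by
    simpa only [hVU, tsum_fintype] using integral_iUnion hVm hVd (hVU.symm ▸ hint v)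
  have hcell : ∀ k, ∫ x in V k, (⨅ j, (g j x - w' j)) * ρ x ∂μ
      ≤ (∫ x in V k, (⨅ j, (g j x - w j)) * ρ x ∂μ) + (w k - w' k) * m k := fun k => calc
    _ ≤ ∫ x in V k, ((⨅ j, (g j x - w j)) * ρ x + (w k - w' k) * ρ x) ∂μ :=
      setIntegral_mono_on ((hint w').mono_set (hsub k))
        (((hint w).mono_set (hsub k)).add ((hρ.mono_set (hsub k)).const_mul _)) (hVm k)
        fun x hx => by
          rw [← add_mul]
          exact mul_le_mul_of_nonneg_right (ciInf_sub_le_ciInf_sub_add (hVmin k x hx)) (hρ0 x)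
    _ = _ := by
      rw [integral_add ((hint w).mono_set (hsub k)) ((hρ.mono_set (hsub k)).const_mul _),
        integral_const_mul, hm k]
  calc dualObjective μ Ω ρ g m w'
      ≤ ∑ k, ((∫ x in V k, (⨅ j, (g j x - w j)) * ρ x ∂μ) + (w k - w' k) * m k)
        + ∑ k, w' k * m k := by
        rw [dualObjective, hsplit]
        gcongr with k
        exact hcell k
    _ = dualObjective μ Ω ρ g m w := by
        simp only [dualObjective, hsplit w, Finset.sum_add_distrib, sub_mul, Finset.sum_sub_distrib]
        ring

end Dual

theorem stmt_17_general (d K : ℕ)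
    (Ω : Set (EuclideanSpace ℝ (Fin d)))
    (hΩb : Bornology.IsBounded Ω) (hΩm : MeasurableSet Ω)
    (ρ : EuclideanSpace ℝ (Fin d) → ℝ) (hρ0 : ∀ x, 0 ≤ ρ x) (hρi : Integrable ρ)
    (dst : EuclideanSpace ℝ (Fin d) → EuclideanSpace ℝ (Fin d) → ℝ)
    (hdstc : Continuous fun p : EuclideanSpace ℝ (Fin d) × EuclideanSpace ℝ (Fin d) => dst p.1 p.2)
    (y : Fin K → EuclideanSpace ℝ (Fin d)) (c : Fin K → ℝ)
    (w : Fin K → ℝ)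
    (hcap : ∀ k, (∫ x in powerCell Ω dst y w k, ρ x) = c k) :
    ∀ w' : Fin K → ℝ,
      (∫ x in Ω, (⨅ j, (dst x (y j) - w' j)) * ρ x) + ∑ k, w' k * c k
        ≤ (∫ x in Ω, (⨅ j, (dst x (y j) - w j)) * ρ x) + ∑ k, w k * c k := by
  rcases isEmpty_or_nonempty (Fin K) with _ | _
  · intro w'
    rw [Subsingleton.elim w' w]
  have hdst : ∀ j, Measurable fun x => dst x (y j) := fun j =>
    (hdstc.uncurry_right (y j)).measurable
  exact isMaxOn_univ_iff.1 <| isMaxOn_dualObjective hΩm hρ0 hρi.integrableOn hdst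
    (exists_abs_le_of_isBounded hdstc hΩb y) (measurableSet_powerCell hΩm hdst)
    pairwise_disjoint_powerCell iUnion_powerCell (fun k x hx => hx.2.1) hcap

theorem stmt_17 (d K : ℕ) (hd : 1 ≤ d) (hK : 0 < K)
    (Ω : Set (EuclideanSpace ℝ (Fin d)))
    (hΩb : Bornology.IsBounded Ω) (hΩm : MeasurableSet Ω)
    (ρ : EuclideanSpace ℝ (Fin d) → ℝ) (hρ0 : ∀ x, 0 ≤ ρ x) (hρi : Integrable ρ)
    (dst : EuclideanSpace ℝ (Fin d) → EuclideanSpace ℝ (Fin d) → ℝ)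
    (hdstc : Continuous fun p : EuclideanSpace ℝ (Fin d) × EuclideanSpace ℝ (Fin d) => dst p.1 p.2)
    (hdst0 : ∀ x y, 0 ≤ dst x y)
    (y : Fin K → EuclideanSpace ℝ (Fin d)) (c : Fin K → ℝ)
    (w : Fin K → ℝ)
    (hcap : ∀ k, (∫ x in powerCell Ω dst y w k, ρ x) = c k) :
    ∀ w' : Fin K → ℝ,
      (∫ x in Ω, (⨅ j, (dst x (y j) - w' j)) * ρ x) + ∑ k, w' k * c k
        ≤ (∫ x in Ω, (⨅ j, (dst x (y j) - w j)) * ρ x) + ∑ k, w k * c k :=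
  stmt_17_general d K Ω hΩb hΩm ρ hρ0 hρi dst hdstc y c w hcap
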